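/- For every even positive integer n there exists a symmetric integer Chebyshev polynomial of degree n on [0,1]: a nonzero polynomial p with integer coefficients, deg p ≤ n, satisfying p(x) = p(1−x) for all x, such that (sup_{x∈[0,1]} |p(x)|)^{1/n} = t_{ℤ,n}([0,1]). -/

import Mathlib

/-!
Integer polynomials of degree `≤ n` whose sup norm on `[0, 1]` is at most `1` form a finite set:
such a polynomial is determined by its values at the nodes `i / (n + 1)`, and these lie in the
discrete set `(n + 1) ^ (-n) ℤ`. Hence the infimum defining `tZ n 0 1` is attained by some `Q`.
The symmetrization `(1 - x) Q(x) + x Q(1 - x)` is pointwise a convex combination of values of `Q`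
on `[0, 1]`, so its sup norm is at most that of `Q`; it has degree `≤ n + 1` and is invariant
under `x ↦ 1 - x`, so its degree is even, hence `≤ n` when `n` is even. If it vanishes, the
symmetrization of `Q(1 - x)` does not.
-/

open Polynomial Filter

/-- The supremum norm of an integer polynomial on the interval `[a, b]`. -/
noncomputable def supNorm (p : Polynomial ℤ) (a b : ℝ) : ℝ :=
  sSup ((fun x => |Polynomial.aeval x p|) '' Set.Icc a b)

/-- `tZ n a b` is the infimum over nonzero integer polynomials `p` of degree at most `n`
of `(sup_{x ∈ [a,b]} |p(x)|)^(1/n)`. -/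
noncomputable def tZ (n : ℕ) (a b : ℝ) : ℝ :=
  sInf {r : ℝ | ∃ p : Polynomial ℤ, p ≠ 0 ∧ p.natDegree ≤ n ∧
    r = supNorm p a b ^ ((1 : ℝ) / n)}

section SupNorm

variable (p : ℤ[X]) {a b : ℝ}

lemma bddAbove_image_abs_aeval : BddAbove ((fun x => |aeval x p|) '' Set.Icc a b) :=
  (isCompact_Icc.image p.continuous_aeval.abs).bddAbove

lemma abs_aeval_le_supNorm {x : ℝ} (hx : x ∈ Set.Icc a b) : |aeval x p| ≤ supNorm p a b :=
  le_csSup (bddAbove_image_abs_aeval p) ⟨x, hx, rfl⟩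

lemma zero_le_supNorm : 0 ≤ supNorm p a b :=
  Real.sSup_nonneg (by rintro _ ⟨x, -, rfl⟩; exact abs_nonneg _)

lemma supNorm_le {c : ℝ} (hab : a ≤ b) (h : ∀ x ∈ Set.Icc a b, |aeval x p| ≤ c) :
    supNorm p a b ≤ c :=
  csSup_le ⟨_, a, Set.left_mem_Icc.2 hab, rfl⟩ (by rintro _ ⟨x, hx, rfl⟩; exact h x hx)

end SupNorm

namespace Polynomial

section OneSubX

variable {R : Type*} [CommRing R]

lemma natDegree_one_sub_X_le : ((1 : R[X]) - X).natDegree ≤ 1 := by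
  compute_degree

lemma natDegree_comp_one_sub_X_le (p : R[X]) : (p.comp (1 - X)).natDegree ≤ p.natDegree :=
  natDegree_comp_le.trans (by simpa using Nat.mul_le_mul_left p.natDegree natDegree_one_sub_X_le)

lemma comp_one_sub_X_comp_one_sub_X (p : R[X]) : (p.comp (1 - X)).comp (1 - X) = p := by
  simp [comp_assoc]

lemma aeval_comp_one_sub_X {A : Type*} [CommRing A] [Algebra R A] (p : R[X]) (x : A) :
    aeval x (p.comp (1 - X)) = aeval (1 - x) p := by
  simp [aeval_comp]

lemma even_natDegree_of_comp_one_sub_X_eq [IsDomain R] [CharZero R] {p : R[X]}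
    (hp : p.comp (1 - X) = p) : Even p.natDegree := by
  have hdeg : ((1 : R[X]) - X).natDegree = 1 := by compute_degree!
  have hlc : ((1 : R[X]) - X).leadingCoeff = -1 := by
    rw [leadingCoeff, hdeg]; simp [coeff_one]
  by_contra hodd
  have hlc_comp := leadingCoeff_comp (p := p) (hdeg ▸ one_ne_zero)
  rw [hp, hlc, (Nat.not_even_iff_odd.1 hodd).neg_one_pow, mul_neg_one, self_eq_neg,
    leadingCoeff_eq_zero] at hlc_comp
  exact hodd (by simp [hlc_comp])

noncomputable def symmetrize (Q : R[X]) : R[X] :=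
  (1 - X) * Q + X * Q.comp (1 - X)

lemma symmetrize_comp_one_sub_X (Q : R[X]) : (symmetrize Q).comp (1 - X) = symmetrize Q := by
  simp only [symmetrize, add_comp, mul_comp, sub_comp, one_comp, X_comp,
    comp_one_sub_X_comp_one_sub_X]
  ring

lemma natDegree_symmetrize_le (Q : R[X]) : (symmetrize Q).natDegree ≤ Q.natDegree + 1 := by
  have h₁ := (natDegree_mul_le (p := 1 - X) (q := Q)).trans
    (Nat.add_le_add_right natDegree_one_sub_X_le _)
  have h₂ := (natDegree_mul_le (p := X) (q := Q.comp (1 - X))).trans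
    (Nat.add_le_add natDegree_X_le (natDegree_comp_one_sub_X_le Q))
  exact (natDegree_add_le _ _).trans (max_le (by omega) (by omega))

lemma aeval_symmetrize {A : Type*} [CommRing A] [Algebra R A] (Q : R[X]) (x : A) :
    aeval x (symmetrize Q) = (1 - x) * aeval x Q + x * aeval (1 - x) Q := by
  simp [symmetrize, aeval_comp_one_sub_X]

lemma symmetrize_ne_zero_or [IsDomain R] [CharZero R] {Q : R[X]} (hQ : Q ≠ 0) :
    symmetrize Q ≠ 0 ∨ symmetrize (Q.comp (1 - X)) ≠ 0 := by
  by_contra! h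
  obtain ⟨h₁, h₂⟩ := h
  simp only [symmetrize, comp_one_sub_X_comp_one_sub_X] at h₁ h₂
  -- the sum gives `Q ∘ (1 - X) = -Q`, the difference `(1 - 2X) (Q - Q ∘ (1 - X)) = 0`
  have h : (1 - 2 * X) * (2 * Q) = 0 := by linear_combination (2 - 2 * X) * h₁ - 2 * X * h₂
  have h2X : (1 - 2 * X : R[X]) ≠ 0 := fun h0 => by
    simpa [coeff_one] using congrArg (coeff · 1) h0
  simp_all

end OneSubX

end Polynomial

lemma supNorm_comp_one_sub_X_le (Q : ℤ[X]) : supNorm (Q.comp (1 - X)) 0 1 ≤ supNorm Q 0 1 :=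
  supNorm_le _ zero_le_one fun x ⟨hx₀, hx₁⟩ => by
    rw [aeval_comp_one_sub_X]
    exact abs_aeval_le_supNorm Q ⟨by linarith, by linarith⟩

lemma supNorm_comp_one_sub_X (Q : ℤ[X]) : supNorm (Q.comp (1 - X)) 0 1 = supNorm Q 0 1 :=
  (supNorm_comp_one_sub_X_le Q).antisymm <| by
    have := supNorm_comp_one_sub_X_le (Q.comp (1 - X))
    rwa [comp_one_sub_X_comp_one_sub_X] at this

lemma supNorm_symmetrize_le (Q : ℤ[X]) : supNorm (symmetrize Q) 0 1 ≤ supNorm Q 0 1 :=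
  supNorm_le _ zero_le_one fun x ⟨hx₀, hx₁⟩ => by
    have hQx := abs_aeval_le_supNorm Q ⟨hx₀, hx₁⟩
    have hQx' := abs_aeval_le_supNorm Q (a := 0) (b := 1) (x := 1 - x) ⟨by linarith, by linarith⟩
    rw [aeval_symmetrize]
    calc |(1 - x) * aeval x Q + x * aeval (1 - x) Q|
        ≤ (1 - x) * |aeval x Q| + x * |aeval (1 - x) Q| := by
          refine (abs_add_le _ _).trans_eq ?_
          rw [abs_mul, abs_mul, abs_of_nonneg (sub_nonneg.2 hx₁), abs_of_nonneg hx₀]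
      _ ≤ (1 - x) * supNorm Q 0 1 + x * supNorm Q 0 1 := by gcongr
      _ = supNorm Q 0 1 := by ring

lemma exists_symmetric_supNorm_le {n : ℕ} (hn : Even n) {Q : ℤ[X]} (hQ : Q ≠ 0)
    (hQn : Q.natDegree ≤ n) :
    ∃ p : ℤ[X], p ≠ 0 ∧ p.natDegree ≤ n ∧ p.comp (1 - X) = p ∧
      supNorm p 0 1 ≤ supNorm Q 0 1 := by
  obtain ⟨R, hR, hRn, hRQ⟩ : ∃ R : ℤ[X], symmetrize R ≠ 0 ∧ R.natDegree ≤ n ∧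
      supNorm R 0 1 = supNorm Q 0 1 := by
    rcases symmetrize_ne_zero_or hQ with h | h
    · exact ⟨Q, h, hQn, rfl⟩
    · exact ⟨_, h, (natDegree_comp_one_sub_X_le Q).trans hQn, supNorm_comp_one_sub_X Q⟩
  refine ⟨symmetrize R, hR, ?_, symmetrize_comp_one_sub_X R,
    hRQ ▸ supNorm_symmetrize_le R⟩
  have hle := natDegree_symmetrize_le R
  obtain ⟨k, hk⟩ := even_natDegree_of_comp_one_sub_X_eq (symmetrize_comp_one_sub_X R)
  obtain ⟨m, rfl⟩ := hn
  omega

lemma exists_int_eq_pow_mul_aeval_div {p : ℤ[X]} {n : ℕ} (hp : p.natDegree ≤ n) (k : ℤ) {d : ℕ}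
    (hd : d ≠ 0) : ∃ z : ℤ, (z : ℝ) = (d : ℝ) ^ n * aeval ((k : ℝ) / d) p := by
  refine ⟨d ^ (n - p.natDegree) * (p.scaleRoots d).eval k, ?_⟩
  have h := scaleRoots_eval₂_mul (p := p) (algebraMap ℤ ℝ) ((k : ℝ) / d) d
  rw [map_natCast, mul_div_cancel₀ _ (Nat.cast_ne_zero.2 hd)] at h
  rw [aeval_def, ← pow_sub_mul_pow _ hp, mul_assoc, ← h, eval₂_at_intCast, Int.cast_mul]
  push_cast
  rw [algebraMap_int_eq, eq_intCast]

lemma finite_setOf_natDegree_le_abs_aeval_le (n : ℕ) (M : ℝ) :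
    {p : ℤ[X] | p.natDegree ≤ n ∧ ∀ x ∈ Set.Icc (0 : ℝ) 1, |aeval x p| ≤ M}.Finite := by
  set N : ℕ := n + 1
  have hN₀ : (N : ℝ) ≠ 0 := by positivity
  let node : Fin N → ℝ := fun i => ((i : ℤ) : ℝ) / N
  have node_mem (i : Fin N) : node i ∈ Set.Icc (0 : ℝ) 1 := by
    refine ⟨by positivity, div_le_one_of_le₀ ?_ (by positivity)⟩
    exact_mod_cast i.isLt.le
  have node_injective : Function.Injective node := fun i j hij =>
    Fin.ext (by simpa [node, hN₀] using hij)
  let Φ : ℤ[X] → Fin N → ℝ := fun p i => (N : ℝ) ^ n * aeval (node i) p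
  set C : ℤ := ⌈(N : ℝ) ^ n * M⌉
  refine .of_finite_image (f := Φ) ((Set.Finite.pi fun _ => (Set.finite_Icc (-C) C).image
    (Int.cast : ℤ → ℝ)).subset ?_) ?_
  · rintro _ ⟨p, ⟨hpn, hpM⟩, rfl⟩ i -
    obtain ⟨z, hz⟩ := exists_int_eq_pow_mul_aeval_div hpn i (Nat.succ_ne_zero n)
    have hzM : |(z : ℝ)| ≤ C := by
      rw [hz, abs_mul, abs_of_nonneg (by positivity)]
      exact (mul_le_mul_of_nonneg_left (hpM _ (node_mem i)) (by positivity)).trans (Int.le_ceil _)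
    exact ⟨z, abs_le.1 (by exact_mod_cast hzM), hz⟩
  · have degree_lt {r : ℤ[X]} (hr : r.natDegree ≤ n) :
        (r.map (algebraMap ℤ ℝ)).degree < (Finset.univ : Finset (Fin N)).card := by
      rw [Finset.card_univ, Fintype.card_fin]
      exact degree_map_le.trans_lt ((degree_le_of_natDegree_le hr).trans_lt
        (by exact_mod_cast Nat.lt_succ_self n))
    rintro p ⟨hpn, -⟩ q ⟨hqn, -⟩ hpq
    refine map_injective _ (algebraMap ℤ ℝ).injective_int <|
      eq_of_degrees_lt_of_eval_index_eq (v := node) Finset.univ node_injective.injOn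
      (degree_lt hpn) (degree_lt hqn) fun i _ => ?_
    rw [eval_map_algebraMap, eval_map_algebraMap]
    exact mul_left_cancel₀ (pow_ne_zero n hN₀) (congrFun hpq i)

lemma exists_isMinOn_supNorm (n : ℕ) :
    ∃ Q ∈ {p : ℤ[X] | p ≠ 0 ∧ p.natDegree ≤ n},
      IsMinOn (fun p => supNorm p 0 1) {p | p ≠ 0 ∧ p.natDegree ≤ n} Q := by
  set S := {p : ℤ[X] | p ≠ 0 ∧ p.natDegree ≤ n}
  have hone : supNorm 1 0 1 ≤ 1 := supNorm_le _ zero_le_one fun _ _ => by simp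
  have hfin : {p ∈ S | supNorm p 0 1 ≤ 1}.Finite :=
    (finite_setOf_natDegree_le_abs_aeval_le n 1).subset fun p ⟨⟨_, hpn⟩, hp⟩ =>
      ⟨hpn, fun x hx => (abs_aeval_le_supNorm p hx).trans hp⟩
  obtain ⟨Q, ⟨hQS, hQ⟩, hmin⟩ :=
    Set.exists_min_image _ (fun p => supNorm p 0 1) hfin ⟨1, ⟨one_ne_zero, by simp⟩, hone⟩
  refine ⟨Q, hQS, fun p hp => ?_⟩
  rcases le_total (supNorm p 0 1) 1 with hp₁ | hp₁
  · exact hmin p ⟨hp, hp₁⟩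
  · exact hQ.trans hp₁

lemma rpow_supNorm_eq_tZ_of_isMinOn {n : ℕ} {a b : ℝ} {p : ℤ[X]} (hp : p ≠ 0)
    (hpn : p.natDegree ≤ n)
    (hmin : IsMinOn (fun p => supNorm p a b) {p | p ≠ 0 ∧ p.natDegree ≤ n} p) :
    supNorm p a b ^ ((1 : ℝ) / n) = tZ n a b := by
  unfold tZ
  apply le_antisymm
  · refine le_csInf ⟨_, p, hp, hpn, rfl⟩ ?_
    rintro _ ⟨q, hq, hqn, rfl⟩
    exact Real.rpow_le_rpow (zero_le_supNorm p) (hmin ⟨hq, hqn⟩) (by positivity)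
  · refine csInf_le ⟨0, ?_⟩ ⟨p, hp, hpn, rfl⟩
    rintro _ ⟨q, -, -, rfl⟩
    exact Real.rpow_nonneg (zero_le_supNorm q) _

theorem stmt_8_general (n : ℕ) (heven : Even n) :
    ∃ p : Polynomial ℤ, p ≠ 0 ∧ p.natDegree ≤ n ∧
      (∀ x : ℝ, Polynomial.aeval x p = Polynomial.aeval (1 - x) p) ∧
      supNorm p 0 1 ^ ((1 : ℝ) / n) = tZ n 0 1 := by
  obtain ⟨Q, ⟨hQ, hQn⟩, hQmin⟩ := exists_isMinOn_supNorm n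
  obtain ⟨p, hp, hpn, hp_symm, hpQ⟩ := exists_symmetric_supNorm_le heven hQ hQn
  refine ⟨p, hp, hpn, fun x => ?_, rpow_supNorm_eq_tZ_of_isMinOn hp hpn fun q hq => ?_⟩
  · rw [← aeval_comp_one_sub_X, hp_symm]
  · exact hpQ.trans (hQmin hq)

theorem stmt_8 (n : ℕ) (hn : 0 < n) (heven : Even n) :
    ∃ p : Polynomial ℤ, p ≠ 0 ∧ p.natDegree ≤ n ∧
      (∀ x : ℝ, Polynomial.aeval x p = Polynomial.aeval (1 - x) p) ∧
      supNorm p 0 1 ^ ((1 : ℝ) / n) = tZ n 0 1 :=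
  stmt_8_general n heven
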